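/- Let ℓ ≥ 5 be prime, let Q be a positive integer divisible by 4 with gcd(Q, 3ℓ) = 1, and let t be an integer with ℓ ∤ (3t + 2) and (3t+2 | ℓ) = (−1 | ℓ). Then there exist integers a, t' with gcd(a, 3Qℓ) = 1, a²(3t + 2) ≡ 3t' + 2 (mod Qℓ), and 48t' ≡ −(Q² + 32) (mod 48ℓ). -/

import Mathlib

/-!
Since `(-(3t+2) | ℓ) = 1`, there is `α` with `α² (3t+2) ≡ -1 (mod ℓ)`. Write `Q = 4q` and
choose, by the Chinese remainder theorem, `a ≡ 1 (mod 3Q)` and `a ≡ qα (mod ℓ)`; then `a` is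
prime to `3Qℓ`. As `a ≡ 1 (mod 3)`, `a² (3t+2) = 3t' + 2` for an integer `t'`, and
`48t' + Q² + 32 = 16 (a² (3t+2) + q²)`, where `a² (3t+2) + q²` is divisible by `3`
(as `a² ≡ q² ≡ 1`) and by `ℓ` (as `a² (3t+2) ≡ q² α² (3t+2) ≡ -q²`).
-/

theorem Int.isCoprime_natCast_iff_intCast_ne_zero {p : ℕ} [Fact p.Prime] (a : ℤ) :
    IsCoprime a p ↔ (a : ZMod p) ≠ 0 := by
  rw [isCoprime_comm, ← ZMod.coe_int_isUnit_iff_isCoprime, isUnit_iff_ne_zero]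

theorem Int.isCoprime_of_modEq_one {a m : ℤ} (h : a ≡ 1 [ZMOD m]) : IsCoprime a m := by
  obtain ⟨k, hk⟩ := Int.modEq_iff_dvd.mp h
  exact ⟨1, k, by linarith⟩

theorem Int.exists_modEq_one_and_intCast_eq {m : ℤ} {n : ℕ} (h : IsCoprime m n) (c : ZMod n) :
    ∃ a : ℤ, a ≡ 1 [ZMOD m] ∧ (a : ZMod n) = c := by
  obtain ⟨u, v, huv⟩ := h
  have hum : (u : ZMod n) * m = 1 := by simpa using congrArg (Int.cast : ℤ → ZMod n) huv
  refine ⟨1 + u * m * (c.cast - 1),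
    Int.modEq_iff_dvd.mpr ⟨-(u * (c.cast - 1)), by ring⟩, ?_⟩
  push_cast [ZMod.intCast_zmod_cast]
  rw [hum]
  ring

theorem legendreSym.exists_sq_mul_eq_neg_one {p : ℕ} [Fact p.Prime] {x : ℤ}
    (hx : (x : ZMod p) ≠ 0) (h : legendreSym p x = legendreSym p (-1)) :
    ∃ α : ZMod p, α ^ 2 * x = -1 := by
  have hneg : legendreSym p (-x) = 1 := by
    rw [neg_eq_neg_one_mul, legendreSym.mul, ← h, ← sq, legendreSym.sq_one p hx]
  obtain ⟨β, hβ⟩ := (legendreSym.eq_one_iff p (by simpa using hx)).mp hneg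
  refine ⟨β / x, ?_⟩
  push_cast at hβ
  field_simp
  linear_combination -hβ

theorem three_dvd_sq_mul_add_sq {a q : ℤ} (ha : a ≡ 1 [ZMOD 3]) (hq : IsCoprime q 3) (t : ℤ) :
    3 ∣ a ^ 2 * (3 * t + 2) + q ^ 2 := by
  have hq2 : q ^ 2 ≡ 1 [ZMOD 3] := Int.ModEq.pow_card_sub_one_eq_one Nat.prime_three hq
  have hsum := ((ha.pow 2).mul_right (3 * t + 2)).add hq2
  exact Int.modEq_zero_iff_dvd.mp (hsum.trans (Int.modEq_zero_iff_dvd.mpr ⟨t + 1, by ring⟩))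

theorem exists_t_prime_omega_general (ℓ : ℕ) [Fact ℓ.Prime] (hℓ : 5 ≤ ℓ)
    (Q : ℤ) (h4Q : 4 ∣ Q) (hQcop : Int.gcd Q (3 * ℓ) = 1)
    (t : ℤ) (hnd : ¬ ((ℓ : ℤ) ∣ 3 * t + 2))
    (hleg : legendreSym ℓ (3 * t + 2) = legendreSym ℓ (-1)) :
    ∃ a t' : ℤ, Int.gcd a (3 * Q * ℓ) = 1 ∧
      a ^ 2 * (3 * t + 2) ≡ 3 * t' + 2 [ZMOD Q * ℓ] ∧
      48 * t' ≡ -(Q ^ 2 + 32) [ZMOD 48 * ℓ] := by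
  have hQ : IsCoprime Q (3 * ℓ) := Int.isCoprime_iff_gcd_eq_one.mpr hQcop
  have h3ℓ : IsCoprime (3 : ℤ) ℓ := by
    exact_mod_cast Nat.isCoprime_iff_coprime.mpr
      ((Nat.coprime_primes Nat.prime_three Fact.out).mpr (by omega))
  obtain ⟨α, hα⟩ := legendreSym.exists_sq_mul_eq_neg_one
    (by rwa [Ne, ZMod.intCast_zmod_eq_zero_iff_dvd]) hleg
  have hα0 : α ≠ 0 := by rintro rfl; simp at hα
  obtain ⟨q, rfl⟩ := h4Q
  have hq : (q : ZMod ℓ) ≠ 0 :=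
    (Int.isCoprime_natCast_iff_intCast_ne_zero q).mp hQ.of_mul_right_right.of_mul_left_right
  -- with `Q = 4 * q`, the condition `4 * a ≡ Q * α` becomes `a ≡ q * α`
  obtain ⟨a, ha, haℓ⟩ := Int.exists_modEq_one_and_intCast_eq
    (h3ℓ.mul_left hQ.of_mul_right_right) ((q : ZMod ℓ) * α)
  have ha3 : a ≡ 1 [ZMOD 3] := ha.of_mul_right _
  obtain ⟨k, hk⟩ := ha3.symm.dvd
  obtain ⟨m, hm⟩ : 3 * (ℓ : ℤ) ∣ a ^ 2 * (3 * t + 2) + q ^ 2 := by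
    refine h3ℓ.mul_dvd (three_dvd_sq_mul_add_sq ha3 hQ.of_mul_right_left.of_mul_left_right t)
      ((ZMod.intCast_zmod_eq_zero_iff_dvd _ ℓ).mp ?_)
    push_cast at hα ⊢
    rw [haℓ]
    linear_combination (q : ZMod ℓ) ^ 2 * hα
  have ht' : 3 * (a ^ 2 * t + 4 * k + 6 * k ^ 2) + 2 = a ^ 2 * (3 * t + 2) := by
    linear_combination (-(2 * a + 2 + 6 * k)) * hk
  refine ⟨a, a ^ 2 * t + 4 * k + 6 * k ^ 2, ?_, ht' ▸ Int.ModEq.refl _, ?_⟩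
  · refine Int.isCoprime_iff_gcd_eq_one.mp ((Int.isCoprime_of_modEq_one ha).mul_right ?_)
    rw [Int.isCoprime_natCast_iff_intCast_ne_zero, haℓ]
    exact mul_ne_zero hq hα0
  · exact Int.modEq_iff_dvd.mpr ⟨-m, by linear_combination -16 * hm - 16 * ht'⟩

theorem exists_t_prime_omega (ℓ : ℕ) [Fact ℓ.Prime] (hℓ : 5 ≤ ℓ)
    (Q : ℤ) (hQ : 0 < Q) (h4Q : 4 ∣ Q) (hQcop : Int.gcd Q (3 * ℓ) = 1)
    (t : ℤ) (hnd : ¬ ((ℓ : ℤ) ∣ 3 * t + 2))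
    (hleg : legendreSym ℓ (3 * t + 2) = legendreSym ℓ (-1)) :
    ∃ a t' : ℤ, Int.gcd a (3 * Q * ℓ) = 1 ∧
      a ^ 2 * (3 * t + 2) ≡ 3 * t' + 2 [ZMOD Q * ℓ] ∧
      48 * t' ≡ -(Q ^ 2 + 32) [ZMOD 48 * ℓ] :=
  exists_t_prime_omega_general ℓ hℓ Q h4Q hQcop t hnd hleg
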